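/- The complete bipartite graph K_{3,3} has majority NSD index 5; in particular no majority 4-edge-coloring of K_{3,3} is neighbor sum distinguishing, while a majority NSD 5-edge-coloring exists. -/
import Mathlib


open Finset

variable {V : Type*} [Fintype V] [DecidableEq V]

/-- A (not necessarily proper) `k`-edge-coloring: a symmetric map giving each edge a color
in `{1, ..., k}`. -/
def EdgeColoring (G : SimpleGraph V) [DecidableRel G.Adj] (k : ℕ) (c : V → V → ℕ) : Prop :=
  (∀ u v, c u v = c v u) ∧ ∀ u v, G.Adj u v → 1 ≤ c u v ∧ c u v ≤ k

/-- The sum of colors of edges incident to `v`. -/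
def sigmaSum (G : SimpleGraph V) [DecidableRel G.Adj] (c : V → V → ℕ) (v : V) : ℕ :=
  ∑ u ∈ G.neighborFinset v, c v u

/-- The number of edges of color `α` incident to `v`. -/
def colorCount (G : SimpleGraph V) [DecidableRel G.Adj] (c : V → V → ℕ) (v : V) (α : ℕ) : ℕ :=
  ((G.neighborFinset v).filter fun u => c v u = α).card

/-- Quasi-majority: each vertex `v` is incident to at most `⌈d(v)/2⌉` edges of each color. -/
def QuasiMajority (G : SimpleGraph V) [DecidableRel G.Adj] (c : V → V → ℕ) : Prop :=
  ∀ v α, colorCount G c v α ≤ (G.degree v + 1) / 2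

/-- Majority: each vertex `v` is incident to at most `d(v)/2` edges of each color. -/
def Majority (G : SimpleGraph V) [DecidableRel G.Adj] (c : V → V → ℕ) : Prop :=
  ∀ v α, 2 * colorCount G c v α ≤ G.degree v

/-- Neighbor sum distinguishing: adjacent vertices get different color sums. -/
def NSD (G : SimpleGraph V) [DecidableRel G.Adj] (c : V → V → ℕ) : Prop :=
  ∀ u v, G.Adj u v → sigmaSum G c u ≠ sigmaSum G c v

/-- A graph is nice if no connected component is isomorphic to `K₂`, equivalently there is
no edge both of whose endpoints have degree 1. -/
def Nice (G : SimpleGraph V) [DecidableRel G.Adj] : Prop :=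
  ¬ ∃ u v, G.Adj u v ∧ G.degree u = 1 ∧ G.degree v = 1


section Aux

abbrev K33 := completeBipartiteGraph (Fin 3) (Fin 3)

instance K33inst : DecidableRel K33.Adj := fun v w => by
  simp only [completeBipartiteGraph_adj]; infer_instance

lemma nbr_inl (i : Fin 3) :
    K33.neighborFinset (Sum.inl i) = univ.map ⟨Sum.inr, Sum.inr_injective⟩ := by
  ext u; cases u <;> simp [SimpleGraph.mem_neighborFinset]

lemma nbr_inr (j : Fin 3) :
    K33.neighborFinset (Sum.inr j) = univ.map ⟨Sum.inl, Sum.inl_injective⟩ := by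
  ext u; cases u <;> simp [SimpleGraph.mem_neighborFinset]

lemma deg_all : ∀ v, K33.degree v = 3 := by decide

lemma sigma_inl (c : (Fin 3 ⊕ Fin 3) → (Fin 3 ⊕ Fin 3) → ℕ) (i : Fin 3) :
    sigmaSum K33 c (Sum.inl i) = ∑ j : Fin 3, c (Sum.inl i) (Sum.inr j) := by
  rw [sigmaSum, nbr_inl, Finset.sum_map]; rfl

lemma sigma_inr (c : (Fin 3 ⊕ Fin 3) → (Fin 3 ⊕ Fin 3) → ℕ) (j : Fin 3) :
    sigmaSum K33 c (Sum.inr j) = ∑ i : Fin 3, c (Sum.inr j) (Sum.inl i) := by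
  rw [sigmaSum, nbr_inr, Finset.sum_map]; rfl

lemma adj_lr (i j : Fin 3) : K33.Adj (Sum.inl i) (Sum.inr j) := by simp

/-- For an injective triple of colors from `Fin 4`, there is a unique missing color `m`,
the sum of used colors is `6 - m`, and every other color is used. -/
lemma rowfact : ∀ r : Fin 3 → Fin 4, Function.Injective r →
    ∃ m : Fin 4, (∀ j, r j ≠ m) ∧ (∑ j, (r j).val) + m.val = 6 ∧
      ∀ α, α ≠ m → ∃ j, r j = α := by
  decide

/-- Core combinatorial fact: no `3 × 3` matrix over `Fin 4` with injective rows and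
columns can have every row value-sum different from every column value-sum. -/
lemma no4 (b : Fin 3 → Fin 3 → Fin 4)
    (hrow : ∀ i, Function.Injective (b i))
    (hcol : ∀ j, Function.Injective (fun i => b i j))
    (hnsd : ∀ i j, (∑ j', (b i j').val) ≠ (∑ i', (b i' j).val)) : False := by
  choose m hm1 hm2 hm3 using fun i => rowfact (b i) (hrow i)
  choose n hn1 hn2 hn3 using fun j => rowfact (fun i => b i j) (hcol j)
  have hmn : ∀ i j, m i ≠ n j := by
    intro i j h
    apply hnsd i j
    have h1 := hm2 i
    have h2 := hn2 j
    have : (m i).val = (n j).val := by rw [h]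
    omega
  -- every column contains the color `m 0`
  choose f hf using fun j => hn3 j (m 0) (hmn 0 j)
  have hfinj : Function.Injective f := by
    intro j j' h
    apply hrow (f j)
    show b (f j) j = b (f j) j'
    rw [hf j, h, hf j']
  obtain ⟨j, hj⟩ := Finite.surjective_of_injective hfinj 0
  have hbj := hf j
  rw [hj] at hbj
  exact hm1 0 j hbj

/-- The matrix of the witness 5-coloring. -/
def M : Fin 3 → Fin 3 → ℕ := ![![1, 2, 3], ![2, 3, 5], ![5, 4, 1]]

/-- The witness coloring as a symmetric function on vertices. -/
def myc : (Fin 3 ⊕ Fin 3) → (Fin 3 ⊕ Fin 3) → ℕ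
  | Sum.inl i, Sum.inr j => M i j
  | Sum.inr j, Sum.inl i => M i j
  | _, _ => 0

lemma count_le_one (c : (Fin 3 ⊕ Fin 3) → (Fin 3 ⊕ Fin 3) → ℕ) (v : Fin 3 ⊕ Fin 3)
    (h : ∀ u u', u ∈ K33.neighborFinset v → u' ∈ K33.neighborFinset v →
      c v u = c v u' → u = u') (α : ℕ) : colorCount K33 c v α ≤ 1 := by
  apply Finset.card_le_one.mpr
  intro a ha b hb
  rw [Finset.mem_filter] at ha hb
  exact h a b ha.1 hb.1 (ha.2.trans hb.2.symm)

end Aux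

theorem mnsdi_K33 [DecidableRel (completeBipartiteGraph (Fin 3) (Fin 3)).Adj] :
    IsLeast {k : ℕ | ∃ c : (Fin 3 ⊕ Fin 3) → (Fin 3 ⊕ Fin 3) → ℕ,
      EdgeColoring (completeBipartiteGraph (Fin 3) (Fin 3)) k c ∧
      Majority (completeBipartiteGraph (Fin 3) (Fin 3)) c ∧
      NSD (completeBipartiteGraph (Fin 3) (Fin 3)) c} 5 := by
  rename_i inst
  obtain rfl : inst = K33inst := Subsingleton.elim _ _
  constructor
  · -- membership: the witness 5-coloring
    refine ⟨myc, ⟨?_, ?_⟩, ?_, ?_⟩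
    · intro u v
      rcases u with i | i <;> rcases v with j | j <;> rfl
    · intro u v huv
      rcases u with i | i <;> rcases v with j | j
      · exact absurd huv (by simp)
      · revert i j; decide
      · revert i j; decide
      · exact absurd huv (by simp)
    · -- Majority
      intro v α
      show 2 * colorCount K33 myc v α ≤ K33.degree v
      have h1 : colorCount K33 myc v α ≤ 1 := by
        apply count_le_one
        intro u u' hu hu' he
        rcases v with i | i
        · rw [nbr_inl] at hu hu'
          simp only [Finset.mem_map, Function.Embedding.coeFn_mk] at hu hu'
          obtain ⟨j, -, rfl⟩ := hu
          obtain ⟨j', -, rfl⟩ := hu'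
          congr 1
          revert he; revert i j j'; decide
        · rw [nbr_inr] at hu hu'
          simp only [Finset.mem_map, Function.Embedding.coeFn_mk] at hu hu'
          obtain ⟨j, -, rfl⟩ := hu
          obtain ⟨j', -, rfl⟩ := hu'
          congr 1
          revert he; revert i j j'; decide
      rw [deg_all]
      omega
    · -- NSD
      intro u v huv
      rcases u with i | i <;> rcases v with j | j <;>
        simp only [completeBipartiteGraph_adj] at huv
      · exfalso; simp at huv
      · rw [sigma_inl, sigma_inr]; revert i j; decide
      · rw [sigma_inl, sigma_inr]; revert i j; decide
      · exfalso; simp at huv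
  · -- lower bound
    rintro k ⟨c, ⟨hsym, hbd⟩, hmaj, hnsd⟩
    by_contra hk
    push_neg at hk
    have hb : ∀ i j : Fin 3, 1 ≤ c (Sum.inl i) (Sum.inr j) ∧ c (Sum.inl i) (Sum.inr j) ≤ 4 := by
      intro i j
      have := hbd _ _ (adj_lr i j)
      omega
    set b : Fin 3 → Fin 3 → Fin 4 := fun i j =>
      ⟨c (Sum.inl i) (Sum.inr j) - 1, by have := hb i j; omega⟩ with hbdef
    have hcval : ∀ i j, (b i j).val + 1 = c (Sum.inl i) (Sum.inr j) := by
      intro i j; have := hb i j; simp [hbdef]; omega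
    have hmaj' : ∀ v α, 2 * colorCount K33 c v α ≤ K33.degree v := hmaj
    have cnt : ∀ v α, colorCount K33 c v α ≤ 1 := by
      intro v α
      have := hmaj' v α
      rw [deg_all] at this
      omega
    apply no4 b
    · -- rows injective
      intro i j j' h
      have hc : c (Sum.inl i) (Sum.inr j) = c (Sum.inl i) (Sum.inr j') := by
        rw [← hcval i j, ← hcval i j', h]
      have hmem : ∀ j₀ : Fin 3, c (Sum.inl i) (Sum.inr j₀) = c (Sum.inl i) (Sum.inr j) →
          Sum.inr j₀ ∈ (K33.neighborFinset (Sum.inl i)).filter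
            (fun u => c (Sum.inl i) u = c (Sum.inl i) (Sum.inr j)) := by
        intro j₀ h₀
        rw [Finset.mem_filter, SimpleGraph.mem_neighborFinset]
        exact ⟨adj_lr i j₀, h₀⟩
      have := Finset.card_le_one.mp (cnt (Sum.inl i) (c (Sum.inl i) (Sum.inr j)))
        _ (hmem j rfl) _ (hmem j' hc.symm)
      exact Sum.inr_injective this
    · -- columns injective
      intro j i i' h
      have hc : c (Sum.inr j) (Sum.inl i) = c (Sum.inr j) (Sum.inl i') := by
        rw [hsym (Sum.inr j) (Sum.inl i), hsym (Sum.inr j) (Sum.inl i'),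
          ← hcval i j, ← hcval i' j]
        exact congrArg (fun x : Fin 4 => x.val + 1) h
      have hmem : ∀ i₀ : Fin 3, c (Sum.inr j) (Sum.inl i₀) = c (Sum.inr j) (Sum.inl i) →
          Sum.inl i₀ ∈ (K33.neighborFinset (Sum.inr j)).filter
            (fun u => c (Sum.inr j) u = c (Sum.inr j) (Sum.inl i)) := by
        intro i₀ h₀
        rw [Finset.mem_filter, SimpleGraph.mem_neighborFinset]
        exact ⟨(adj_lr i₀ j).symm, h₀⟩
      have := Finset.card_le_one.mp (cnt (Sum.inr j) (c (Sum.inr j) (Sum.inl i)))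
        _ (hmem i rfl) _ (hmem i' hc.symm)
      exact Sum.inl_injective this
    · -- NSD transfer
      intro i j h
      apply hnsd (Sum.inl i) (Sum.inr j) (adj_lr i j)
      rw [sigma_inl, sigma_inr]
      have e1 : ∑ j' : Fin 3, c (Sum.inl i) (Sum.inr j') = (∑ j', (b i j').val) + 3 := by
        rw [Fin.sum_univ_three, Fin.sum_univ_three]
        have h0 := hcval i 0; have h1 := hcval i 1; have h2 := hcval i 2
        omega
      have e2 : ∑ i' : Fin 3, c (Sum.inr j) (Sum.inl i') = (∑ i', (b i' j).val) + 3 := by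
        rw [Fin.sum_univ_three, Fin.sum_univ_three]
        have s0 := hsym (Sum.inr j) (Sum.inl 0)
        have s1 := hsym (Sum.inr j) (Sum.inl 1)
        have s2 := hsym (Sum.inr j) (Sum.inl 2)
        have h0 := hcval 0 j; have h1 := hcval 1 j; have h2 := hcval 2 j
        omega
      rw [e1, e2, h]
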